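/- Let a ∈ ℝⁿ have i.i.d. standard Gaussian entries, x ∈ ℝⁿ fixed, j an index, and Z := (aᵀx)² a_j². Define Z̃ := ‖x‖₂² + 2x_j² − Z. Then E[Z̃] = 0, Z̃ ≤ 3‖x‖₂² almost surely, and E[Z̃²] = 8‖x‖₂⁴ + 68x_j²‖x‖₂² + 20x_j⁴ ≤ 96‖x‖₂⁴. -/

import Mathlib

/-!
Split `a ⬝ x = x j * a j + W` with `W = ∑_{i ≠ j} a i * x i`. The coordinate `a j` and `W` are
independent, and `W` is a centred Gaussian of variance `V = ‖x‖² - x j²`, so `(a j, a ⬝ x)` has the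
law of `(g, x j * g + √V * h)` for independent standard Gaussians `g, h`. Expanding binomially,
`E[(a ⬝ x)^q (a j)^w]` becomes a combination of products of standard Gaussian moments, which obey
`m (p + 2) = (p + 1) * m p` (differentiate the moment generating function `exp (t² / 2)`). This gives
`E[Z] = ‖x‖² + 2 x j²` and `E[Z²] = 9‖x‖⁴ + 72 x j² ‖x‖² + 24 x j⁴`; the claims about
`Z̃ = E[Z] - Z` follow by expanding the square, and the almost sure bound from `Z ≥ 0`.
-/

open MeasureTheory ProbabilityTheory Real

lemma integral_pow_gaussianReal_eq_iteratedDeriv (p : ℕ) :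
    ∫ x, x ^ p ∂gaussianReal 0 1 = iteratedDeriv p (fun t ↦ rexp (t ^ 2 / 2)) 0 := by
  have h := iteratedDeriv_mgf_zero (X := fun x ↦ x) (μ := gaussianReal 0 1) (by simp) p
  simp only [mgf_fun_id_gaussianReal, zero_mul, zero_add, NNReal.coe_one, one_mul] at h
  rw [h]
  rfl

lemma integral_pow_add_two_gaussianReal (p : ℕ) :
    ∫ x, x ^ (p + 2) ∂gaussianReal 0 1 = (p + 1) * ∫ x, x ^ p ∂gaussianReal 0 1 := by
  have hderiv : deriv (fun t ↦ rexp (t ^ 2 / 2)) = fun t ↦ t * rexp (t ^ 2 / 2) := by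
    ext t
    rw [_root_.deriv_exp (by fun_prop)]
    simp
    ring
  rw [integral_pow_gaussianReal_eq_iteratedDeriv, integral_pow_gaussianReal_eq_iteratedDeriv,
    iteratedDeriv_succ', hderiv, iteratedDeriv_fun_mul (by fun_prop) (by fun_prop),
    Finset.sum_eq_single 1]
  · simp [iteratedDeriv_fun_id_zero]
  · intro k _ hk
    simp [iteratedDeriv_fun_id_zero, hk]
  · simp

lemma integrable_pow_gaussianReal (p : ℕ) : Integrable (fun x ↦ x ^ p) (gaussianReal 0 1) :=
  integrable_pow_of_mem_interior_integrableExpSet (by simp) p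

lemma map_pi_gaussianReal_sum_mul {ι : Type*} [Fintype ι] (y : ι → ℝ) :
    (Measure.pi fun _ : ι ↦ gaussianReal 0 1).map (fun a ↦ ∑ i, a i * y i)
      = gaussianReal 0 (∑ i, y i ^ 2).toNNReal := by
  let L : StrongDual ℝ (EuclideanSpace ℝ ι) := innerSL ℝ (WithLp.toLp 2 y)
  have hL : (Measure.pi fun _ : ι ↦ gaussianReal 0 1).map (fun a ↦ ∑ i, a i * y i)
      = (stdGaussian (EuclideanSpace ℝ ι)).map L := by
    rw [← map_pi_eq_stdGaussian, Measure.map_map (by fun_prop) (by fun_prop)]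
    congr 1
  rw [hL, IsGaussian.eq_gaussianReal ((stdGaussian _).map L) inferInstance,
    integral_map (by fun_prop) (by fun_prop), variance_map (by fun_prop) (by fun_prop)]
  simp only [id, Function.id_comp, integral_strongDual_stdGaussian, variance_dual_stdGaussian, L,
    innerSL_apply_norm, EuclideanSpace.real_norm_sq_eq]

lemma map_pi_gaussianReal_coord_sum_mul {m : ℕ} (x : Fin (m + 1) → ℝ) (j : Fin (m + 1)) :
    (Measure.pi fun _ ↦ gaussianReal 0 1).map (fun a ↦ (a j, ∑ i, a i * x i))
      = ((gaussianReal 0 1).prod (gaussianReal 0 1)).map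
          (fun p ↦ (p.1, x j * p.1 + √(∑ i, x (j.succAbove i) ^ 2) * p.2)) := by
  set y : Fin m → ℝ := fun i ↦ x (j.succAbove i)
  set s := √(∑ i, y i ^ 2)
  have hsplit : (fun a : Fin (m + 1) → ℝ ↦ (a j, ∑ i, a i * x i))
      = (fun p : ℝ × ℝ ↦ (p.1, x j * p.1 + p.2)) ∘ Prod.map id (fun c ↦ ∑ i, c i * y i) ∘
          MeasurableEquiv.piFinSuccAbove (fun _ ↦ ℝ) j := by
    ext a
    · rfl
    · simp [Fin.sum_univ_succAbove _ j, y, Fin.removeNth, mul_comm]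
  have hscale : (gaussianReal 0 1).map (s * ·) = gaussianReal 0 (∑ i, y i ^ 2).toNNReal := by
    rw [gaussianReal_map_const_mul]
    congr 1
    · simp
    · ext
      simp [s, Real.sq_sqrt (Finset.sum_nonneg fun i _ ↦ sq_nonneg (y i))]
      positivity
  have hprod : (gaussianReal 0 1).prod ((gaussianReal 0 1).map (s * ·))
      = ((gaussianReal 0 1).prod (gaussianReal 0 1)).map (Prod.map id (s * ·)) := by
    rw [← Measure.map_prod_map _ _ measurable_id (by fun_prop), Measure.map_id]
  rw [hsplit, ← Measure.map_map (by fun_prop) (by fun_prop),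
    ← Measure.map_map (by fun_prop) (MeasurableEquiv.measurable _),
    (measurePreserving_piFinSuccAbove _ j).map_eq,
    ← Measure.map_prod_map _ _ (by fun_prop) (by fun_prop), Measure.map_id,
    map_pi_gaussianReal_sum_mul, ← hscale, hprod, Measure.map_map (by fun_prop) (by fun_prop)]
  rfl

lemma add_mul_pow_mul_pow_eq_sum (t s u v : ℝ) (q w : ℕ) :
    (t * u + s * v) ^ q * u ^ w = ∑ r ∈ Finset.range (q + 1),
      q.choose r * t ^ r * s ^ (q - r) * (u ^ (r + w) * v ^ (q - r)) := by
  rw [add_pow, Finset.sum_mul]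
  refine Finset.sum_congr rfl fun r _ ↦ ?_
  ring

lemma integrable_add_mul_pow_mul_pow_gaussianReal_prod (t s : ℝ) (q w : ℕ) :
    Integrable (fun p : ℝ × ℝ ↦ (t * p.1 + s * p.2) ^ q * p.1 ^ w)
      ((gaussianReal 0 1).prod (gaussianReal 0 1)) := by
  simp_rw [add_mul_pow_mul_pow_eq_sum]
  exact integrable_finsetSum _ fun r _ ↦
    ((integrable_pow_gaussianReal _).mul_prod (integrable_pow_gaussianReal _)).const_mul _

lemma integral_add_mul_pow_mul_pow_gaussianReal_prod (t s : ℝ) (q w : ℕ) :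
    ∫ p : ℝ × ℝ, (t * p.1 + s * p.2) ^ q * p.1 ^ w ∂(gaussianReal 0 1).prod (gaussianReal 0 1)
      = ∑ r ∈ Finset.range (q + 1), q.choose r * t ^ r * s ^ (q - r) *
          ((∫ x, x ^ (r + w) ∂gaussianReal 0 1) * ∫ x, x ^ (q - r) ∂gaussianReal 0 1) := by
  simp_rw [add_mul_pow_mul_pow_eq_sum]
  rw [integral_finsetSum _ fun r _ ↦
    ((integrable_pow_gaussianReal _).mul_prod (integrable_pow_gaussianReal _)).const_mul _]
  refine Finset.sum_congr rfl fun r _ ↦ ?_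
  rw [integral_const_mul, integral_prod_mul (fun x ↦ x ^ (r + w)) (fun x ↦ x ^ (q - r))]

lemma integral_const_sub_sq {Ω : Type*} [MeasurableSpace Ω] {μ : Measure Ω}
    [IsProbabilityMeasure μ] {Z : Ω → ℝ} (c : ℝ) (hZ : Integrable Z μ)
    (hZ2 : Integrable (fun ω ↦ Z ω ^ 2) μ) :
    ∫ ω, (c - Z ω) ^ 2 ∂μ = c ^ 2 - 2 * c * ∫ ω, Z ω ∂μ + ∫ ω, Z ω ^ 2 ∂μ := by
  simp_rw [sub_sq]
  rw [integral_add (by fun_prop) hZ2, integral_sub (by fun_prop) (by fun_prop), integral_const,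
    integral_const_mul]
  simp

section CoordinateAndLinearForm

variable {m : ℕ} (x : Fin (m + 1) → ℝ) (j : Fin (m + 1))

lemma integrable_pi_gaussianReal_comp_coord_sum_mul {F : ℝ × ℝ → ℝ} (hF : Measurable F) :
    Integrable (fun a ↦ F (a j, ∑ i, a i * x i)) (Measure.pi fun _ ↦ gaussianReal 0 1) ↔
      Integrable (fun p ↦ F (p.1, x j * p.1 + √(∑ i, x (j.succAbove i) ^ 2) * p.2))
        ((gaussianReal 0 1).prod (gaussianReal 0 1)) := by
  have hpi := integrable_map_measure (μ := Measure.pi fun _ ↦ gaussianReal 0 1)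
    (f := fun a ↦ (a j, ∑ i, a i * x i)) hF.aestronglyMeasurable (by fun_prop)
  rw [map_pi_gaussianReal_coord_sum_mul, integrable_map_measure hF.aestronglyMeasurable
    (by fun_prop)] at hpi
  exact hpi.symm

lemma integral_pi_gaussianReal_comp_coord_sum_mul {F : ℝ × ℝ → ℝ} (hF : Measurable F) :
    ∫ a, F (a j, ∑ i, a i * x i) ∂(Measure.pi fun _ ↦ gaussianReal 0 1) =
      ∫ p, F (p.1, x j * p.1 + √(∑ i, x (j.succAbove i) ^ 2) * p.2)
        ∂(gaussianReal 0 1).prod (gaussianReal 0 1) := by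
  rw [← integral_map (by fun_prop) hF.aestronglyMeasurable, map_pi_gaussianReal_coord_sum_mul,
    integral_map (by fun_prop) hF.aestronglyMeasurable]

lemma integrable_sum_mul_pow_mul_coord_pow (q w : ℕ) :
    Integrable (fun a ↦ (∑ i, a i * x i) ^ q * a j ^ w) (Measure.pi fun _ ↦ gaussianReal 0 1) :=
  (integrable_pi_gaussianReal_comp_coord_sum_mul x j (F := fun p ↦ p.2 ^ q * p.1 ^ w)
    (by fun_prop)).2 (integrable_add_mul_pow_mul_pow_gaussianReal_prod _ _ q w)

lemma integral_sum_mul_pow_mul_coord_pow (q w : ℕ) :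
    ∫ a, (∑ i, a i * x i) ^ q * a j ^ w ∂(Measure.pi fun _ ↦ gaussianReal 0 1)
      = ∑ r ∈ Finset.range (q + 1), q.choose r * x j ^ r * √(∑ i, x (j.succAbove i) ^ 2) ^ (q - r) *
          ((∫ x, x ^ (r + w) ∂gaussianReal 0 1) * ∫ x, x ^ (q - r) ∂gaussianReal 0 1) := by
  rw [← integral_add_mul_pow_mul_pow_gaussianReal_prod]
  exact integral_pi_gaussianReal_comp_coord_sum_mul x j (F := fun p ↦ p.2 ^ q * p.1 ^ w)
    (by fun_prop)

lemma integral_sum_mul_sq_mul_coord_sq :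
    ∫ a, (∑ i, a i * x i) ^ 2 * a j ^ 2 ∂(Measure.pi fun _ ↦ gaussianReal 0 1)
      = ∑ i, x i ^ 2 + 2 * x j ^ 2 := by
  set V := ∑ i, x (j.succAbove i) ^ 2
  have hs : √V ^ 2 = V := Real.sq_sqrt (by positivity)
  rw [integral_sum_mul_pow_mul_coord_pow, Fin.sum_univ_succAbove _ j]
  simp [Finset.sum_range_succ, integral_pow_add_two_gaussianReal]
  linear_combination hs

lemma integral_sum_mul_sq_mul_coord_sq_sq :
    ∫ a, ((∑ i, a i * x i) ^ 2 * a j ^ 2) ^ 2 ∂(Measure.pi fun _ ↦ gaussianReal 0 1)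
      = 9 * (∑ i, x i ^ 2) ^ 2 + 72 * x j ^ 2 * ∑ i, x i ^ 2 + 24 * x j ^ 4 := by
  set V := ∑ i, x (j.succAbove i) ^ 2
  have hs : √V ^ 2 = V := Real.sq_sqrt (by positivity)
  simp_rw [mul_pow, ← pow_mul]
  rw [integral_sum_mul_pow_mul_coord_pow, Fin.sum_univ_succAbove _ j]
  simp [Finset.sum_range_succ, integral_pow_add_two_gaussianReal, Nat.choose]
  linear_combination (9 * (√V ^ 2 + V) + 90 * x j ^ 2) * hs

end CoordinateAndLinearForm

theorem stmt_2 {n : ℕ} (x : Fin n → ℝ) (j : Fin n)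
    (μ : Measure (Fin n → ℝ))
    (hμ : μ = Measure.pi fun _ => gaussianReal 0 1) :
    (∫ a, ((∑ i, (x i) ^ 2) + 2 * (x j) ^ 2 - (∑ i, a i * x i) ^ 2 * (a j) ^ 2) ∂μ = 0)
    ∧ (∀ᵐ a ∂μ,
        (∑ i, (x i) ^ 2) + 2 * (x j) ^ 2 - (∑ i, a i * x i) ^ 2 * (a j) ^ 2
          ≤ 3 * (∑ i, (x i) ^ 2))
    ∧ (∫ a, ((∑ i, (x i) ^ 2) + 2 * (x j) ^ 2 - (∑ i, a i * x i) ^ 2 * (a j) ^ 2) ^ 2 ∂μ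
        = 8 * (∑ i, (x i) ^ 2) ^ 2 + 68 * (x j) ^ 2 * (∑ i, (x i) ^ 2) + 20 * (x j) ^ 4)
    ∧ (8 * (∑ i, (x i) ^ 2) ^ 2 + 68 * (x j) ^ 2 * (∑ i, (x i) ^ 2) + 20 * (x j) ^ 4
        ≤ 96 * (∑ i, (x i) ^ 2) ^ 2) := by
  subst hμ
  obtain ⟨m, rfl⟩ := Nat.exists_eq_add_one.2 j.pos
  have hZ := integrable_sum_mul_pow_mul_coord_pow x j 2 2
  have hZ2 : Integrable (fun a : Fin (m + 1) → ℝ ↦ ((∑ i, a i * x i) ^ 2 * a j ^ 2) ^ 2)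
      (Measure.pi fun _ ↦ gaussianReal 0 1) :=
    (integrable_sum_mul_pow_mul_coord_pow x j 4 4).congr (ae_of_all _ fun a ↦ by ring)
  have hxj : x j ^ 2 ≤ ∑ i, x i ^ 2 :=
    Finset.single_le_sum (fun i _ ↦ sq_nonneg (x i)) (Finset.mem_univ j)
  refine ⟨?_, ae_of_all _ fun a ↦ ?_, ?_, ?_⟩
  · rw [integral_sub (integrable_const _) hZ, integral_const, integral_sum_mul_sq_mul_coord_sq]
    simp
  · have hZ_nonneg : 0 ≤ (∑ i, a i * x i) ^ 2 * a j ^ 2 := by positivity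
    linarith
  · rw [integral_const_sub_sq _ hZ hZ2, integral_sum_mul_sq_mul_coord_sq,
      integral_sum_mul_sq_mul_coord_sq_sq]
    ring
  · nlinarith [sq_nonneg (x j)]
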